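/- arXiv:1901.05889 — 4 statements merged into one kernel-verified Lean document; each statement's English description precedes it below -/
import Mathlib

section
/- Let $m \geq 2$ be a positive integer and $\omega$ a primitive $m$-th root of unity. Define $f(a,k,z,q) = \sum_{n=1}^{\infty}\left(\frac{k q^n}{1-kq^n} + \frac{a q^n/z}{1-a q^n/z} - \frac{a q^n}{1-aq^n} - \frac{k q^n/z}{1-k q^n/z}\right)$. Then $\sum_{j=0}^{m-1} f(a\omega^j, k\omega^j, z, q) = m\, f(a^m, k^m, z^m, q^m)$. -/
/-!
For `c ^ m ≠ 1`, expanding `1 / (1 - c ω^j) = (∑_{r<m} c^r ω^{jr}) / (1 - c^m)` and using that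
`∑_j ω^{jr}` vanishes for `0 < r < m` gives `∑_j c ω^j / (1 - c ω^j) = m c^m / (1 - c^m)`.
Each of the four Lambert series in `lambertF` has summands of this shape with `c` a multiple of
`q^(n+1)`, so the identity holds termwise; absolute convergence lets the finite sum over `j`
pass through the `tsum`.
-/

noncomputable def lambertF (a k z q : ℂ) : ℂ :=
  ∑' n : ℕ, (k * q ^ (n + 1) / (1 - k * q ^ (n + 1))
    + a * q ^ (n + 1) / z / (1 - a * q ^ (n + 1) / z)
    - a * q ^ (n + 1) / (1 - a * q ^ (n + 1))
    - k * q ^ (n + 1) / z / (1 - k * q ^ (n + 1) / z))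

open Finset Filter

section RootsOfUnity

variable {K : Type*} [Field K] {m : ℕ} {ω : K}

theorem IsPrimitiveRoot.geom_sum_pow_of_lt (hω : IsPrimitiveRoot ω m) {r : ℕ} (hr : r < m) :
    ∑ j ∈ range m, (ω ^ r) ^ j = if r = 0 then (m : K) else 0 := by
  split_ifs with h0
  · simp [h0]
  · rw [geom_sum_eq (hω.pow_ne_one_of_pos_of_lt h0 hr), pow_right_comm, hω.pow_eq_one,
      one_pow, sub_self, zero_div]

theorem one_div_one_sub_eq_geom_sum_div {x : K} (hx : x ^ m ≠ 1) :
    1 / (1 - x) = (∑ r ∈ range m, x ^ r) / (1 - x ^ m) := by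
  have hx1 : x ≠ 1 := by rintro rfl; simp at hx
  have hm1 : 1 - x ^ m ≠ 0 := sub_ne_zero.2 hx.symm
  rw [geom_sum_eq hx1]
  field_simp
  ring

theorem IsPrimitiveRoot.mul_pow_pow_eq_pow (hω : IsPrimitiveRoot ω m) (c : K) (j : ℕ) :
    (c * ω ^ j) ^ m = c ^ m := by
  rw [mul_pow, pow_right_comm, hω.pow_eq_one, one_pow, mul_one]

theorem IsPrimitiveRoot.sum_one_div_one_sub_mul_pow (hω : IsPrimitiveRoot ω m) {c : K}
    (hc : c ^ m ≠ 1) : ∑ j ∈ range m, 1 / (1 - c * ω ^ j) = m / (1 - c ^ m) := by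
  calc ∑ j ∈ range m, 1 / (1 - c * ω ^ j)
      = (∑ r ∈ range m, c ^ r * ∑ j ∈ range m, (ω ^ r) ^ j) / (1 - c ^ m) := by
        simp_rw [one_div_one_sub_eq_geom_sum_div ((hω.mul_pow_pow_eq_pow c _).symm ▸ hc),
          hω.mul_pow_pow_eq_pow, ← sum_div]
        rw [sum_comm]
        simp_rw [mul_sum, mul_pow, pow_right_comm ω]
    _ = m / (1 - c ^ m) := by
        rw [sum_congr rfl fun r hr => by rw [hω.geom_sum_pow_of_lt (mem_range.1 hr)]]
        rcases m.eq_zero_or_pos with rfl | hm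
        · simp
        · simp [mul_ite, hm]

theorem IsPrimitiveRoot.sum_div_one_sub_mul_pow (hω : IsPrimitiveRoot ω m) {c : K}
    (hc : c ^ m ≠ 1) :
    ∑ j ∈ range m, c * ω ^ j / (1 - c * ω ^ j) = m * (c ^ m / (1 - c ^ m)) := by
  have hterm : ∀ j, c * ω ^ j / (1 - c * ω ^ j) = 1 / (1 - c * ω ^ j) - 1 := fun j => by
    have : 1 - c * ω ^ j ≠ 0 := sub_ne_zero.2 fun h =>
      hc (by rw [← hω.mul_pow_pow_eq_pow c j, ← h, one_pow])
    field_simp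
    ring
  have hm1 : 1 - c ^ m ≠ 0 := sub_ne_zero.2 hc.symm
  rw [sum_congr rfl fun j _ => hterm j, sum_sub_distrib, hω.sum_one_div_one_sub_mul_pow hc]
  simp only [sum_const, card_range, nsmul_eq_mul, mul_one]
  field_simp
  ring

end RootsOfUnity

theorem Summable.div_one_sub {𝕜 : Type*} [NormedField 𝕜] [CompleteSpace 𝕜] {u : ℕ → 𝕜}
    (hu : Summable fun n => ‖u n‖) : Summable fun n => u n / (1 - u n) := by
  have hinv : Tendsto (fun n => (1 - u n)⁻¹) atTop (nhds 1) := by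
    simpa using ((tendsto_const_nhds (x := (1 : 𝕜))).sub hu.of_norm.tendsto_atTop_zero).inv₀
      (by simp)
  refine summable_of_isBigO_nat hu ?_
  simpa [div_eq_mul_inv] using
    ((Asymptotics.isBigO_refl u atTop).mul (hinv.isBigO_one 𝕜)).norm_right

noncomputable def lambertSummand (a k z x : ℂ) : ℂ :=
  k * x / (1 - k * x) + a * x / z / (1 - a * x / z) - a * x / (1 - a * x)
    - k * x / z / (1 - k * x / z)

theorem lambertF_eq_tsum (a k z q : ℂ) :
    lambertF a k z q = ∑' n : ℕ, lambertSummand a k z (q ^ (n + 1)) := rfl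

theorem summable_lambertSummand (a k z : ℂ) {q : ℂ} (hq : ‖q‖ < 1) :
    Summable fun n : ℕ => lambertSummand a k z (q ^ (n + 1)) := by
  have hx : Summable fun n : ℕ => ‖q ^ (n + 1)‖ := by
    simpa using (summable_nat_add_iff 1).2 (summable_geometric_of_lt_one (norm_nonneg q) hq)
  have hc (c : ℂ) : Summable fun n : ℕ => c * q ^ (n + 1) / (1 - c * q ^ (n + 1)) :=
    Summable.div_one_sub (by simpa using hx.mul_left ‖c‖)
  have hcz (c : ℂ) : Summable fun n : ℕ => c * q ^ (n + 1) / z / (1 - c * q ^ (n + 1) / z) := by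
    simpa only [div_mul_eq_mul_div] using hc (c / z)
  exact (((hc k).add (hcz a)).sub (hc a)).sub (hcz k)

theorem IsPrimitiveRoot.sum_lambertSummand {m : ℕ} {ω : ℂ} (hω : IsPrimitiveRoot ω m)
    {a k z x : ℂ} (ha : a ^ m * x ^ m ≠ 1) (hk : k ^ m * x ^ m ≠ 1)
    (haz : a ^ m * x ^ m / z ^ m ≠ 1) (hkz : k ^ m * x ^ m / z ^ m ≠ 1) :
    ∑ j ∈ range m, lambertSummand (a * ω ^ j) (k * ω ^ j) z x
      = m * lambertSummand (a ^ m) (k ^ m) (z ^ m) (x ^ m) := by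
  simp only [lambertSummand, sum_add_distrib, sum_sub_distrib, mul_right_comm _ (ω ^ _) x,
    mul_div_right_comm _ (ω ^ _) z]
  rw [hω.sum_div_one_sub_mul_pow (by rwa [mul_pow]),
    hω.sum_div_one_sub_mul_pow (by rwa [div_pow, mul_pow]),
    hω.sum_div_one_sub_mul_pow (by rwa [mul_pow]),
    hω.sum_div_one_sub_mul_pow (by rwa [div_pow, mul_pow])]
  simp only [mul_pow, div_pow]
  ring

theorem stmt_3_general (m : ℕ) (ω : ℂ) (hω : IsPrimitiveRoot ω m)
    (a k z q : ℂ) (hq : ‖q‖ < 1)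
    (hdenm : ∀ n : ℕ, a ^ m * (q ^ m) ^ (n + 1) ≠ 1
      ∧ k ^ m * (q ^ m) ^ (n + 1) ≠ 1
      ∧ a ^ m * (q ^ m) ^ (n + 1) / z ^ m ≠ 1
      ∧ k ^ m * (q ^ m) ^ (n + 1) / z ^ m ≠ 1) :
    ∑ j ∈ Finset.range m, lambertF (a * ω ^ j) (k * ω ^ j) z q
      = m * lambertF (a ^ m) (k ^ m) (z ^ m) (q ^ m) := by
  simp only [lambertF_eq_tsum]
  rw [← tsum_mul_left, ← Summable.tsum_finsetSum fun j _ => summable_lambertSummand _ _ _ hq]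
  refine tsum_congr fun n => ?_
  obtain ⟨ha, hk, haz, hkz⟩ := hdenm n
  rw [← pow_right_comm] at ha hk haz hkz
  rw [hω.sum_lambertSummand ha hk haz hkz, pow_right_comm]

theorem stmt_3 (m : ℕ) (hm : 2 ≤ m) (ω : ℂ) (hω : IsPrimitiveRoot ω m)
    (a k z q : ℂ) (hq : ‖q‖ < 1) (hz : z ≠ 0)
    (hden : ∀ j : ℕ, j < m → ∀ n : ℕ,
      a * ω ^ j * q ^ (n + 1) ≠ 1 ∧ k * ω ^ j * q ^ (n + 1) ≠ 1
      ∧ a * ω ^ j * q ^ (n + 1) / z ≠ 1 ∧ k * ω ^ j * q ^ (n + 1) / z ≠ 1)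
    (hdenm : ∀ n : ℕ, a ^ m * (q ^ m) ^ (n + 1) ≠ 1
      ∧ k ^ m * (q ^ m) ^ (n + 1) ≠ 1
      ∧ a ^ m * (q ^ m) ^ (n + 1) / z ^ m ≠ 1
      ∧ k ^ m * (q ^ m) ^ (n + 1) / z ^ m ≠ 1) :
    ∑ j ∈ Finset.range m, lambertF (a * ω ^ j) (k * ω ^ j) z q
      = m * lambertF (a ^ m) (k ^ m) (z ^ m) (q ^ m) :=
  stmt_3_general m ω hω a k z q hq hdenm
end

section
/- For $|q|<1$ and $|z|<1$, $\sum_{n=0}^{\infty} \frac{z^n}{(q;q)_n} = \frac{1}{(z;q)_{\infty}}$, where $(q;q)_n = \prod_{j=1}^n(1-q^j)$ and $(z;q)_\infty = \prod_{j=0}^\infty (1-zq^j)$. -/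
/-!
The left-hand side is the `q`-exponential `e_q(z) = ∑ zⁿ / (q; q)ₙ`, a power series of radius `1`
since the ratio of consecutive coefficients is `1 / (1 - q^(n+1)) → 1`. Comparing coefficients
gives `e_q(z) - e_q(qz) = z e_q(z)`, and iterating, `e_q(q^N z) = (z; q)_N e_q(z)`. As `N → ∞` the
left side tends to `e_q(0) = 1` by continuity and the right side to `(z; q)_∞ e_q(z)`.
-/

open Filter Finset Topology

def qPochhammer {R : Type*} [CommRing R] (a q : R) (n : ℕ) : R :=
  ∏ j ∈ range n, (1 - a * q ^ j)

section
variable {R : Type*} [CommRing R] (a q : R)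

lemma qPochhammer_succ (n : ℕ) :
    qPochhammer a q (n + 1) = qPochhammer a q n * (1 - a * q ^ n) :=
  prod_range_succ _ _

lemma qPochhammer_self (n : ℕ) : qPochhammer q q n = ∏ j ∈ range n, (1 - q ^ (j + 1)) := by
  simp only [qPochhammer, pow_succ']

end

section
variable {𝕜 : Type*} [NontriviallyNormedField 𝕜]

lemma norm_mul_pow_lt_one {a q : 𝕜} (ha : ‖a‖ < 1) (hq : ‖q‖ ≤ 1) (n : ℕ) : ‖a * q ^ n‖ < 1 := by
  rw [norm_mul, norm_pow]
  exact (mul_le_of_le_one_right (norm_nonneg a) (pow_le_one₀ (norm_nonneg q) hq)).trans_lt ha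

lemma qPochhammer_ne_zero {a q : 𝕜} (ha : ‖a‖ < 1) (hq : ‖q‖ ≤ 1) (n : ℕ) :
    qPochhammer a q n ≠ 0 :=
  prod_ne_zero_iff.2 fun j _ ↦ (isUnit_one_sub_of_norm_lt_one (norm_mul_pow_lt_one ha hq j)).ne_zero

noncomputable def qExpSeries (q : 𝕜) : FormalMultilinearSeries 𝕜 𝕜 𝕜 :=
  FormalMultilinearSeries.ofScalars 𝕜 fun n ↦ (qPochhammer q q n)⁻¹

noncomputable def qExp (q : 𝕜) : 𝕜 → 𝕜 := (qExpSeries q).sum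

variable {q : 𝕜}

lemma qExp_zero : qExp q 0 = 1 :=
  (FormalMultilinearSeries.ofScalarsSum_zero (E := 𝕜) _).trans (by simp [qPochhammer])

lemma qExpSeries_radius (hq : ‖q‖ < 1) : (qExpSeries q).radius = 1 := by
  have hfactor : Tendsto (fun n : ℕ ↦ 1 - q * q ^ n) atTop (𝓝 1) := by
    simpa using tendsto_const_nhds.sub
      ((tendsto_pow_atTop_nhds_zero_of_norm_lt_one hq).const_mul q)
  have hratio : Tendsto (fun n ↦ ‖(qPochhammer q q (n + 1))⁻¹‖ / ‖(qPochhammer q q n)⁻¹‖)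
      atTop (𝓝 ((1 : NNReal) : ℝ)) := by
    refine (hfactor.norm.inv₀ (by simp)).congr (fun n ↦ ?_) |>.trans (by simp)
    have hP : ‖(qPochhammer q q n)⁻¹‖ ≠ 0 :=
      norm_ne_zero_iff.2 (inv_ne_zero (qPochhammer_ne_zero hq hq.le n))
    rw [qPochhammer_succ, mul_inv, norm_mul, mul_div_cancel_left₀ _ hP, norm_inv]
  exact (FormalMultilinearSeries.ofScalars_radius_eq_inv_of_tendsto 𝕜 _ one_ne_zero hratio).trans
    (by simp)

variable [CompleteSpace 𝕜]

lemma tendsto_qPochhammer (a : 𝕜) {q : 𝕜} (hq : ‖q‖ < 1) :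
    Tendsto (qPochhammer a q) atTop (𝓝 (∏' j, (1 - a * q ^ j))) := by
  have hsum : Summable fun j ↦ ‖-(a * q ^ j)‖ := by
    simpa [norm_mul, norm_pow] using
      (summable_geometric_of_lt_one (norm_nonneg q) hq).mul_left ‖a‖
  have h := (multipliable_one_add_of_summable hsum).hasProd.tendsto_prod_nat
  simp only [← sub_eq_add_neg] at h
  exact h

lemma hasSum_qExp (hq : ‖q‖ < 1) {w : 𝕜} (hw : ‖w‖ < 1) :
    HasSum (fun n ↦ w ^ n / qPochhammer q q n) (qExp q w) := by
  have hmem : w ∈ Metric.eball (0 : 𝕜) (qExpSeries q).radius := by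
    rw [qExpSeries_radius hq, Metric.mem_eball, edist_zero_right, ← ofReal_norm]
    exact ENNReal.ofReal_lt_one.2 hw
  have hterm : (fun n ↦ qExpSeries q n fun _ ↦ w) = fun n ↦ w ^ n / qPochhammer q q n := by
    funext n
    simp [qExpSeries, div_eq_mul_inv]
  exact hterm ▸ (qExpSeries q).hasSum hmem

lemma tendsto_qExp_pow_mul (hq : ‖q‖ < 1) (z : 𝕜) :
    Tendsto (fun N ↦ qExp q (q ^ N * z)) atTop (𝓝 1) := by
  have hcont : ContinuousAt (qExp q) 0 :=
    (qExpSeries q).continuousOn.continuousAt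
      (Metric.eball_mem_nhds 0 (by simp [qExpSeries_radius hq]))
  have hlim : Tendsto (fun N ↦ q ^ N * z) atTop (𝓝 0) := by
    simpa using (tendsto_pow_atTop_nhds_zero_of_norm_lt_one hq).mul_const z
  simpa only [qExp_zero, Function.comp_def] using hcont.tendsto.comp hlim

lemma qExp_mul_left (hq : ‖q‖ < 1) {w : 𝕜} (hw : ‖w‖ < 1) :
    qExp q (q * w) = (1 - w) * qExp q w := by
  have hqw : ‖q * w‖ < 1 := by
    rw [norm_mul]; nlinarith [norm_nonneg q, norm_nonneg w]
  have hshift (n : ℕ) : w ^ (n + 1) / qPochhammer q q (n + 1)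
      - (q * w) ^ (n + 1) / qPochhammer q q (n + 1) = w * (w ^ n / qPochhammer q q n) := by
    rw [← sub_div, qPochhammer_succ,
      show w ^ (n + 1) - (q * w) ^ (n + 1) = w * w ^ n * (1 - q * q ^ n) by ring,
      mul_div_mul_right _ _ (isUnit_one_sub_of_norm_lt_one (norm_mul_pow_lt_one hq hq.le n)).ne_zero,
      mul_div_assoc]
  have hdiff := (hasSum_qExp hq hw).sub (hasSum_qExp hq hqw)
  rw [← hasSum_nat_add_iff' 1] at hdiff
  simp only [hshift, range_one, sum_singleton, pow_zero, sub_self, sub_zero] at hdiff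
  linear_combination -hdiff.unique ((hasSum_qExp hq hw).mul_left w)

lemma qExp_pow_mul (hq : ‖q‖ < 1) {z : 𝕜} (hz : ‖z‖ < 1) (N : ℕ) :
    qExp q (q ^ N * z) = qPochhammer z q N * qExp q z := by
  induction N with
  | zero => simp [qPochhammer]
  | succ N ih =>
    have hN : ‖q ^ N * z‖ < 1 := mul_comm z (q ^ N) ▸ norm_mul_pow_lt_one hz hq.le N
    rw [pow_succ', mul_assoc, qExp_mul_left hq hN, ih, qPochhammer_succ]
    ring

end

theorem stmt_4 (q z : ℂ) (hq : ‖q‖ < 1) (hz : ‖z‖ < 1) :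
    ∑' n : ℕ, z ^ n / ∏ j ∈ Finset.range n, (1 - q ^ (j + 1))
      = (∏' j : ℕ, (1 - z * q ^ j))⁻¹ := by
  simp_rw [← qPochhammer_self, (hasSum_qExp hq hz).tsum_eq]
  have hlim := ((tendsto_qPochhammer z hq).mul_const (qExp q z)).congr fun N ↦
    (qExp_pow_mul hq hz N).symm
  exact eq_inv_of_mul_eq_one_right (tendsto_nhds_unique hlim (tendsto_qExp_pow_mul hq z))
end

section
/- For $|q|<1$ and any complex $z$, $\sum_{n=0}^{\infty} \frac{q^{n(n-1)/2}(-z)^n}{(q;q)_n} = (z;q)_{\infty}$, where $(q;q)_n = \prod_{j=1}^n(1-q^j)$ and $(z;q)_\infty = \prod_{j=0}^\infty (1-zq^j)$. -/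
/-!
Write `F(z)` for the left-hand side. Its terms satisfy `tₙ₊₁ = tₙ · (-z qⁿ) / (1 - qⁿ⁺¹)`, which
gives the functional equation `F(z) = (1 - z) F(qz)` and hence `F(z) = (z;q)_N F(qᴺz)` for every
`N`. As `N → ∞`, dominated convergence gives `F(qᴺz) → F(0) = 1`, while `(z;q)_N → (z;q)_∞`.
-/

open Filter Finset Topology

section

variable {𝕜 : Type*} [NormedField 𝕜]

noncomputable def eulerTerm (q z : 𝕜) (n : ℕ) : 𝕜 :=
  q ^ (n * (n - 1) / 2) * (-z) ^ n / ∏ j ∈ range n, (1 - q ^ (j + 1))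

noncomputable def eulerSeries (q z : 𝕜) : 𝕜 :=
  ∑' n, eulerTerm q z n

@[simp]
lemma eulerTerm_zero (q z : 𝕜) : eulerTerm q z 0 = 1 := by
  simp [eulerTerm]

lemma eulerTerm_mul_left (q c z : 𝕜) (n : ℕ) :
    eulerTerm q (c * z) n = c ^ n * eulerTerm q z n := by
  simp only [eulerTerm, neg_mul_eq_mul_neg, mul_pow]
  ring

lemma eulerTerm_succ (q z : 𝕜) (n : ℕ) :
    eulerTerm q z (n + 1) = eulerTerm q z n * (-z * q ^ n / (1 - q ^ (n + 1))) := by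
  rw [eulerTerm, eulerTerm, Nat.triangle_succ, prod_range_succ, div_mul_div_comm]
  ring

lemma eulerTerm_succ_sub_eulerTerm_mul_left {q : 𝕜} {n : ℕ} (hq : 1 - q ^ (n + 1) ≠ 0)
    (z : 𝕜) :
    eulerTerm q z (n + 1) - eulerTerm q (q * z) (n + 1) = -z * eulerTerm q (q * z) n := by
  rw [eulerTerm_mul_left, eulerTerm_mul_left, eulerTerm_succ]
  field_simp
  ring

lemma one_sub_norm_le_norm_one_sub_pow {q : 𝕜} (hq : ‖q‖ ≤ 1) {n : ℕ} (hn : n ≠ 0) :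
    1 - ‖q‖ ≤ ‖1 - q ^ n‖ :=
  calc 1 - ‖q‖ ≤ 1 - ‖q‖ ^ n := by gcongr; exact pow_le_of_le_one (norm_nonneg q) hq hn
    _ ≤ ‖1 - q ^ n‖ := by simpa using norm_sub_norm_le (1 : 𝕜) (q ^ n)

lemma one_sub_pow_ne_zero {q : 𝕜} (hq : ‖q‖ < 1) {n : ℕ} (hn : n ≠ 0) : 1 - q ^ n ≠ 0 :=
  norm_pos_iff.mp ((sub_pos.mpr hq).trans_le (one_sub_norm_le_norm_one_sub_pow hq.le hn))

variable {q : 𝕜}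

lemma summable_norm_eulerTerm (hq : ‖q‖ < 1) (z : 𝕜) : Summable fun n => ‖eulerTerm q z n‖ := by
  have hq₁ : 0 < 1 - ‖q‖ := sub_pos.mpr hq
  have hratio : Tendsto (fun n : ℕ => ‖z‖ * ‖q‖ ^ n / (1 - ‖q‖)) atTop (𝓝 0) := by
    simpa using ((tendsto_pow_atTop_nhds_zero_of_lt_one (norm_nonneg q) hq).const_mul ‖z‖
      |>.div_const (1 - ‖q‖))
  refine summable_of_ratio_norm_eventually_le (by norm_num : (1 / 2 : ℝ) < 1) ?_
  filter_upwards [hratio.eventually_le_const (by norm_num : (0 : ℝ) < 1 / 2)] with n hn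
  simp only [norm_norm]
  rw [eulerTerm_succ, norm_mul, mul_comm]
  refine mul_le_mul_of_nonneg_right (le_trans ?_ hn) (norm_nonneg _)
  rw [norm_div, norm_mul, norm_neg, norm_pow]
  exact div_le_div_of_nonneg_left (by positivity) hq₁
    (one_sub_norm_le_norm_one_sub_pow hq.le n.succ_ne_zero)

variable [CompleteSpace 𝕜]

lemma summable_eulerTerm (hq : ‖q‖ < 1) (z : 𝕜) : Summable (eulerTerm q z) :=
  (summable_norm_eulerTerm hq z).of_norm

lemma eulerSeries_eq_one_sub_mul (hq : ‖q‖ < 1) (z : 𝕜) :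
    eulerSeries q z = (1 - z) * eulerSeries q (q * z) := by
  have hdiff : eulerSeries q z - eulerSeries q (q * z) = -z * eulerSeries q (q * z) := by
    rw [eulerSeries, eulerSeries, ← (summable_eulerTerm hq z).tsum_sub (summable_eulerTerm hq _),
      ((summable_eulerTerm hq z).sub (summable_eulerTerm hq _)).tsum_eq_zero_add]
    simp only [eulerTerm_zero, sub_self, zero_add,
      eulerTerm_succ_sub_eulerTerm_mul_left (one_sub_pow_ne_zero hq (Nat.succ_ne_zero _))]
    exact tsum_mul_left
  linear_combination hdiff

lemma eulerSeries_eq_prod_mul (hq : ‖q‖ < 1) (N : ℕ) (z : 𝕜) :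
    eulerSeries q z = (∏ j ∈ range N, (1 - z * q ^ j)) * eulerSeries q (q ^ N * z) := by
  induction N with
  | zero => simp
  | succ N ih =>
    rw [ih, eulerSeries_eq_one_sub_mul hq, prod_range_succ, pow_succ', mul_assoc q]
    ring

lemma tendsto_eulerSeries_pow_mul (hq : ‖q‖ < 1) (z : 𝕜) :
    Tendsto (fun N => eulerSeries q (q ^ N * z)) atTop (𝓝 1) := by
  have hpow : Tendsto (fun N => q ^ N) atTop (𝓝 0) := tendsto_pow_atTop_nhds_zero_of_norm_lt_one hq
  have key := tendsto_tsum_of_dominated_convergence (𝓕 := atTop)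
    (f := fun N n => eulerTerm q (q ^ N * z) n) (g := fun n => (0 : 𝕜) ^ n * eulerTerm q z n)
    (summable_norm_eulerTerm hq z) (fun n => ?_) (Eventually.of_forall fun N n => ?_)
  · rwa [tsum_eq_single 0 fun n hn => by simp [hn], pow_zero, one_mul, eulerTerm_zero] at key
  · simp only [eulerTerm_mul_left]
    exact (hpow.pow n).mul_const _
  · rw [eulerTerm_mul_left, norm_mul, norm_pow, norm_pow]
    exact mul_le_of_le_one_left (norm_nonneg _)
      (pow_le_one₀ (by positivity) (pow_le_one₀ (norm_nonneg q) hq.le))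

lemma multipliable_one_sub_mul_pow (hq : ‖q‖ < 1) (z : 𝕜) :
    Multipliable fun j : ℕ => 1 - z * q ^ j := by
  simp_rw [sub_eq_add_neg]
  refine multipliable_one_add_of_summable ?_
  simpa [norm_mul, norm_pow] using
    (summable_geometric_of_lt_one (norm_nonneg q) hq).mul_left ‖z‖

end

theorem stmt_5 (q z : ℂ) (hq : ‖q‖ < 1) :
    ∑' n : ℕ, q ^ (n * (n - 1) / 2) * (-z) ^ n
        / ∏ j ∈ Finset.range n, (1 - q ^ (j + 1))
      = ∏' j : ℕ, (1 - z * q ^ j) := by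
  have hprod : Tendsto (fun N => (∏ j ∈ range N, (1 - z * q ^ j)) * eulerSeries q (q ^ N * z))
      atTop (𝓝 ((∏' j : ℕ, (1 - z * q ^ j)) * 1)) :=
    (multipliable_one_sub_mul_pow hq z).hasProd.tendsto_prod_nat.mul
      (tendsto_eulerSeries_pow_mul hq z)
  simp only [← eulerSeries_eq_prod_mul hq, mul_one] at hprod
  exact tendsto_nhds_unique tendsto_const_nhds hprod
end

section
/- For $|q|<1$ and complex $a$ with $|a|<1/|q|$ and $aq^n \neq 1$ for all $n \geq 1$: $\sum_{n=1}^{\infty} \frac{a q^n}{1-a q^n} = -\sum_{n=1}^{\infty} \frac{q^{n(n+1)/2}(-a)^n}{(qa;q)_n (1-q^n)}$, where $(qa;q)_n = \prod_{j=1}^{n}(1-aq^j)$. -/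
open Finset

/-!
Both sides are iterated sums of the absolutely convergent double series
`K(n, k) = (-y)^(n+1) q^C(n+1,2) / (y; q)_(n+2)` with `y = a q^(k+1)` (`qLambertKernel (a * q) q n k`).
For fixed `k` the sum over `n` telescopes, since `(y; q)_(m+1) = (y; q)_m (1 - y q^m)`, to
`-y / (1 - y)`, minus the `k`-th Lambert term. For fixed `n`, `K(n, k)` is a constant times
`(q^(n+1))^k / (a q^(k+1); q)_(n+2)`, which is `1 / (1 - q^(n+1))` times the difference of consecutive
values of `(q^(n+1))^k / (a q^(k+1); q)_(n+1)`; this sum telescopes to the `n`-th term on the right.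
Absolute convergence holds because `|y| ≤ |aq| < 1` keeps `(y; q)_m` uniformly away from zero:
`∏ |1 - z_j|⁻¹ ≤ exp (∑ |z_j| / (1 - c))` when all `|z_j| ≤ c < 1`.
-/

theorem Summable.hasSum_sub_succ {G : Type*} [AddCommGroup G] [TopologicalSpace G]
    [IsTopologicalAddGroup G] {h : ℕ → G} (hs : Summable h) :
    HasSum (fun n => h n - h (n + 1)) (h 0) := by
  simpa using hs.hasSum.sub ((hasSum_nat_add_iff' 1).2 hs.hasSum)

/-- The `q`-Pochhammer symbol `(x; q)_n`. -/
def qPoch {R : Type*} [CommRing R] (x q : R) (n : ℕ) : R := ∏ j ∈ range n, (1 - x * q ^ j)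

section QPochhammer

variable {R : Type*} [CommRing R] (x q : R) (n : ℕ)

@[simp]
theorem qPoch_zero : qPoch x q 0 = 1 := prod_range_zero _

theorem qPoch_succ : qPoch x q (n + 1) = qPoch x q n * (1 - x * q ^ n) :=
  prod_range_succ _ _

theorem qPoch_succ' : qPoch x q (n + 1) = (1 - x) * qPoch (x * q) q n := by
  simp only [qPoch, prod_range_succ', pow_succ, pow_zero, mul_one, mul_assoc, mul_comm]

theorem qPoch_mul_eq_prod (a : R) : qPoch (a * q) q n = ∏ j ∈ range n, (1 - a * q ^ (j + 1)) :=
  prod_congr rfl fun j _ => by ring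

end QPochhammer

section NormedField

variable {𝕜 : Type*} [NormedField 𝕜] {x q : 𝕜}

theorem one_sub_ne_zero_of_norm_lt_one {z : 𝕜} (hz : ‖z‖ < 1) : 1 - z ≠ 0 := fun h => by
  rw [← sub_eq_zero.1 h, norm_one] at hz
  exact hz.false

theorem norm_inv_one_sub_le {z : 𝕜} {c : ℝ} (hz : ‖z‖ ≤ c) (hc : c < 1) :
    ‖(1 - z)⁻¹‖ ≤ 1 + ‖z‖ / (1 - c) := by
  have hz1 : 0 < 1 - ‖z‖ := by linarith
  calc ‖(1 - z)⁻¹‖ = ‖1 - z‖⁻¹ := norm_inv _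
    _ ≤ (1 - ‖z‖)⁻¹ := by
      gcongr
      simpa using norm_sub_norm_le (1 : 𝕜) z
    _ = 1 + ‖z‖ / (1 - ‖z‖) := by field_simp; ring
    _ ≤ 1 + ‖z‖ / (1 - c) := by gcongr

theorem norm_mul_pow_le_of_norm_le_one (hq : ‖q‖ ≤ 1) (x : 𝕜) (k : ℕ) :
    ‖x * q ^ k‖ ≤ ‖x‖ := by
  rw [norm_mul, norm_pow]
  exact mul_le_of_le_one_right (norm_nonneg _) (pow_le_one₀ (norm_nonneg _) hq)

theorem norm_inv_prod_one_sub_le {ι : Type*} (s : Finset ι) {z : ι → 𝕜} {c : ℝ}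
    (hz : ∀ i ∈ s, ‖z i‖ ≤ c) (hc : c < 1) :
    ‖(∏ i ∈ s, (1 - z i))⁻¹‖ ≤ Real.exp ((∑ i ∈ s, ‖z i‖) / (1 - c)) := by
  rw [← prod_inv_distrib, norm_prod, sum_div]
  calc ∏ i ∈ s, ‖(1 - z i)⁻¹‖ ≤ ∏ i ∈ s, (1 + ‖z i‖ / (1 - c)) :=
        prod_le_prod (fun _ _ => norm_nonneg _) fun i hi => norm_inv_one_sub_le (hz i hi) hc
    _ ≤ _ := Real.prod_one_add_le_exp_sum s fun i => div_nonneg (norm_nonneg _) (by linarith)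


theorem qPoch_ne_zero (hq : ‖q‖ ≤ 1) (hx : ‖x‖ < 1) (n : ℕ) : qPoch x q n ≠ 0 :=
  prod_ne_zero_iff.2 fun j _ =>
    one_sub_ne_zero_of_norm_lt_one ((norm_mul_pow_le_of_norm_le_one hq x j).trans_lt hx)

theorem norm_inv_qPoch_le (hq : ‖q‖ < 1) {c : ℝ} (hx : ‖x‖ ≤ c) (hc : c < 1) (n : ℕ) :
    ‖(qPoch x q n)⁻¹‖ ≤ Real.exp (c / ((1 - ‖q‖) * (1 - c))) := by
  have hterm : ∀ j, ‖x * q ^ j‖ = ‖x‖ * ‖q‖ ^ j := fun j => by rw [norm_mul, norm_pow]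
  refine (norm_inv_prod_one_sub_le _ (fun j _ => ?_) hc).trans (Real.exp_le_exp.2 ?_)
  · exact (norm_mul_pow_le_of_norm_le_one hq.le x j).trans hx
  · have hgeom : ∑ j ∈ range n, ‖q‖ ^ j ≤ (1 - ‖q‖)⁻¹ := by
      have := geom_sum_Ico_le_of_lt_one (m := 0) (n := n) (norm_nonneg q) hq
      rwa [← range_eq_Ico, pow_zero, one_div] at this
    rw [← div_div]
    refine div_le_div_of_nonneg_right ?_ (by linarith)
    calc ∑ j ∈ range n, ‖x * q ^ j‖ = ‖x‖ * ∑ j ∈ range n, ‖q‖ ^ j := by simp_rw [hterm, mul_sum]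
      _ ≤ c * (1 - ‖q‖)⁻¹ := by gcongr; linarith [norm_nonneg x]
      _ = c / (1 - ‖q‖) := (div_eq_mul_inv _ _).symm

variable [CompleteSpace 𝕜]

theorem hasSum_neg_pow_mul_div_qPoch (hq : ‖q‖ < 1) (hx : ‖x‖ < 1) :
    HasSum (fun m => (-x) ^ m * q ^ m.choose 2 / qPoch x q (m + 1)) 1 := by
  set h : ℕ → 𝕜 := fun m => (-x) ^ m * q ^ m.choose 2 / qPoch x q m
  have hsum : Summable h := by
    refine Summable.of_norm_bounded ((summable_geometric_of_lt_one (norm_nonneg x) hx).mul_left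
      (Real.exp (‖x‖ / ((1 - ‖q‖) * (1 - ‖x‖))))) fun m => ?_
    simp only [h]
    rw [div_eq_mul_inv, norm_mul, norm_mul, norm_pow, norm_pow, norm_neg, mul_comm]
    gcongr
    · exact norm_inv_qPoch_le hq le_rfl hx m
    · exact mul_le_of_le_one_right (by positivity) (pow_le_one₀ (norm_nonneg _) hq.le)
  have htel : ∀ m, h m - h (m + 1) = (-x) ^ m * q ^ m.choose 2 / qPoch x q (m + 1) := fun m => by
    have hP := qPoch_ne_zero hq.le hx m
    have hP' := qPoch_ne_zero hq.le hx (m + 1)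
    rw [qPoch_succ] at hP' ⊢
    have hx' := right_ne_zero_of_mul hP'
    simp only [h, qPoch_succ, Nat.choose_succ_succ', Nat.choose_one_right, pow_add, pow_succ]
    field_simp
    ring
  simpa [htel, h] using hsum.hasSum_sub_succ

theorem hasSum_pow_pow_div_qPoch (hq : ‖q‖ < 1) (hx : ‖x‖ < 1) {m : ℕ} (hm : m ≠ 0) :
    HasSum (fun k => (q ^ m) ^ k / qPoch (x * q ^ k) q (m + 1)) ((1 - q ^ m) * qPoch x q m)⁻¹ := by
  have hqm : ‖q ^ m‖ < 1 := by rw [norm_pow]; exact pow_lt_one₀ (norm_nonneg _) hq hm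
  have hxk := norm_mul_pow_le_of_norm_le_one hq.le x
  set G : ℕ → 𝕜 := fun k => (q ^ m) ^ k / qPoch (x * q ^ k) q m
  have hsum : Summable G := by
    refine Summable.of_norm_bounded ((summable_geometric_of_lt_one (norm_nonneg _) hqm).mul_left
      (Real.exp (‖x‖ / ((1 - ‖q‖) * (1 - ‖x‖))))) fun k => ?_
    simp only [G]
    rw [div_eq_mul_inv, norm_mul, norm_pow, mul_comm]
    gcongr
    exact norm_inv_qPoch_le hq (hxk k) hx m
  have htel : ∀ k, G k - G (k + 1)
      = (1 - q ^ m) * ((q ^ m) ^ k / qPoch (x * q ^ k) q (m + 1)) := fun k => by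
    have hxk' := (hxk k).trans_lt hx
    have h2 := qPoch_ne_zero hq.le hxk' (m + 1)
    have e1 : G k = (q ^ m) ^ k * (1 - x * q ^ k * q ^ m) / qPoch (x * q ^ k) q (m + 1) := by
      rw [qPoch_succ] at h2 ⊢
      exact (mul_div_mul_right _ _ (right_ne_zero_of_mul h2)).symm
    have e2 : G (k + 1) = (1 - x * q ^ k) * (q ^ m) ^ (k + 1) / qPoch (x * q ^ k) q (m + 1) := by
      rw [qPoch_succ', mul_assoc, ← pow_succ]
      exact (mul_div_mul_left _ _ (one_sub_ne_zero_of_norm_lt_one hxk')).symm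
    rw [e1, e2, ← sub_div, mul_div_assoc']
    ring_nf
  rw [← hasSum_mul_left_iff (one_sub_ne_zero_of_norm_lt_one hqm), mul_inv,
    mul_inv_cancel_left₀ (one_sub_ne_zero_of_norm_lt_one hqm)]
  simpa [htel, G] using hsum.hasSum_sub_succ

def qLambertKernel (x q : 𝕜) (n k : ℕ) : 𝕜 :=
  (-(x * q ^ k)) ^ (n + 1) * q ^ (n + 1).choose 2 / qPoch (x * q ^ k) q (n + 2)

theorem hasSum_qLambertKernel_left (hq : ‖q‖ < 1) (hx : ‖x‖ < 1) (k : ℕ) :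
    HasSum (fun n => qLambertKernel x q n k) (-(x * q ^ k / (1 - x * q ^ k))) := by
  have hxk := (norm_mul_pow_le_of_norm_le_one hq.le x k).trans_lt hx
  have hrow := hasSum_neg_pow_mul_div_qPoch hq hxk
  have h := (hasSum_nat_add_iff' 1).2 hrow
  have h1 := one_sub_ne_zero_of_norm_lt_one hxk
  have hval : 1 - ∑ i ∈ range 1, (-(x * q ^ k)) ^ i * q ^ i.choose 2 / qPoch (x * q ^ k) q (i + 1)
      = -(x * q ^ k / (1 - x * q ^ k)) := by
    simp only [sum_range_one, pow_zero, Nat.choose_zero_succ, qPoch_succ, qPoch_zero, mul_one,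
      one_mul]
    field_simp
    ring
  rw [hval] at h
  have e : (fun n => qLambertKernel x q n k) = fun n =>
      (-(x * q ^ k)) ^ (n + 1) * q ^ (n + 1).choose 2 / qPoch (x * q ^ k) q (n + 1 + 1) := by
    funext n
    simp only [qLambertKernel]
  rw [e]
  exact h

theorem hasSum_qLambertKernel_right (hq : ‖q‖ < 1) (hx : ‖x‖ < 1) (n : ℕ) :
    HasSum (fun k => qLambertKernel x q n k)
      ((-x) ^ (n + 1) * q ^ (n + 1).choose 2 / ((1 - q ^ (n + 1)) * qPoch x q (n + 1))) := by
  have h := (hasSum_pow_pow_div_qPoch hq hx n.add_one_ne_zero).mul_left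
    ((-x) ^ (n + 1) * q ^ (n + 1).choose 2)
  rw [← div_eq_mul_inv] at h
  refine h.congr_fun fun k => ?_
  simp only [qLambertKernel]
  ring

theorem summable_uncurry_qLambertKernel (hq : ‖q‖ < 1) (hx : ‖x‖ < 1) :
    Summable (Function.uncurry (qLambertKernel x q)) := by
  set B := Real.exp (‖x‖ / ((1 - ‖q‖) * (1 - ‖x‖)))
  refine Summable.of_norm_bounded (g := fun p => (B * ‖x‖ ^ p.1) * ‖q‖ ^ p.2)
    (((summable_geometric_of_lt_one (norm_nonneg x) hx).mul_left B).mul_of_nonneg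
      (summable_geometric_of_lt_one (norm_nonneg q) hq) (fun _ => by positivity)
      (fun _ => by positivity)) fun ⟨n, k⟩ => ?_
  simp only [Function.uncurry_apply_pair, qLambertKernel]
  rw [div_eq_mul_inv, norm_mul, norm_mul, norm_pow, norm_pow, norm_neg, norm_mul, norm_pow,
    mul_pow, ← pow_mul]
  have hr := norm_nonneg q
  calc ‖x‖ ^ (n + 1) * ‖q‖ ^ (k * (n + 1)) * ‖q‖ ^ (n + 1).choose 2
        * ‖(qPoch (x * q ^ k) q (n + 2))⁻¹‖
      ≤ ‖x‖ ^ n * ‖q‖ ^ k * 1 * B := by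
        gcongr ?_ * ?_ * ?_ * ?_
        · exact pow_le_pow_of_le_one (norm_nonneg x) hx.le n.le_succ
        · exact pow_le_pow_of_le_one hr hq.le (Nat.le_mul_of_pos_right k n.succ_pos)
        · exact pow_le_one₀ hr hq.le
        · exact norm_inv_qPoch_le hq (norm_mul_pow_le_of_norm_le_one hq.le x k) hx _
    _ = B * ‖x‖ ^ n * ‖q‖ ^ k := by ring

end NormedField

theorem Nat.add_one_mul_add_two_div_two (n : ℕ) :
    (n + 1) * (n + 2) / 2 = (n + 1) + (n + 1).choose 2 := by
  rw [show (n + 1) * (n + 2) = (n + 1) * n + 2 * (n + 1) by ring,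
    Nat.add_mul_div_left _ _ two_pos, Nat.choose_two_right, Nat.add_sub_cancel]
  ring

theorem stmt_10_general (a q : ℂ) (hq : ‖q‖ < 1)
    (ha : ‖a‖ < 1 / ‖q‖) :
    ∑' n : ℕ, a * q ^ (n + 1) / (1 - a * q ^ (n + 1))
      = - ∑' n : ℕ, q ^ ((n + 1) * (n + 2) / 2) * (-a) ^ (n + 1)
          / ((∏ j ∈ Finset.range (n + 1), (1 - a * q ^ (j + 1)))
              * (1 - q ^ (n + 1))) := by
  have haq : ‖a * q‖ < 1 := by
    rcases eq_or_ne q 0 with rfl | hq0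
    · simp
    · rwa [norm_mul, ← lt_div_iff₀ (norm_pos_iff.2 hq0)]
  calc ∑' n : ℕ, a * q ^ (n + 1) / (1 - a * q ^ (n + 1))
      = -∑' k, ∑' n, qLambertKernel (a * q) q n k := by
        rw [← tsum_neg]
        refine tsum_congr fun k => ?_
        rw [(hasSum_qLambertKernel_left hq haq k).tsum_eq, neg_neg, pow_succ', mul_assoc]
    _ = -∑' n, ∑' k, qLambertKernel (a * q) q n k := by
        rw [(summable_uncurry_qLambertKernel hq haq).tsum_comm'
          (fun n => (hasSum_qLambertKernel_right hq haq n).summable)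
          (fun k => (hasSum_qLambertKernel_left hq haq k).summable)]
    _ = _ := by
        refine congrArg _ (tsum_congr fun n => ?_)
        rw [(hasSum_qLambertKernel_right hq haq n).tsum_eq, qPoch_mul_eq_prod,
          Nat.add_one_mul_add_two_div_two, pow_add]
        ring

theorem stmt_10 (a q : ℂ) (hq : ‖q‖ < 1)
    (ha : ‖a‖ < 1 / ‖q‖)
    (ha' : ∀ n : ℕ, 1 ≤ n → a * q ^ n ≠ 1) :
    ∑' n : ℕ, a * q ^ (n + 1) / (1 - a * q ^ (n + 1))
      = - ∑' n : ℕ, q ^ ((n + 1) * (n + 2) / 2) * (-a) ^ (n + 1)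
          / ((∏ j ∈ Finset.range (n + 1), (1 - a * q ^ (j + 1)))
              * (1 - q ^ (n + 1))) :=
  stmt_10_general a q hq ha
end
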